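/- Let b_1, ..., b_r be an RKZ-reduced basis of a lattice L (i.e., its reciprocal basis is Korkhine-Zolotarev reduced), with Gram-Schmidt vectors b_1^*, ..., b_r^*. Then ‖b_i^*‖ ≥ λ_1(L)/C_i for each i, where C_i is Hermite's constant of rank i and λ_1(L) is the length of a shortest nonzero lattice vector. -/

import Mathlib

/-- The Gram-Schmidt orthogonalization of a finite family of vectors. -/
noncomputable def gsE {E : Type*} [NormedAddCommGroup E] [InnerProductSpace ℝ E] {r : ℕ}
    (c : Fin r → E) : Fin r → E :=
  haveI : WellFoundedLT (Fin r) := inferInstance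
  InnerProductSpace.gramSchmidt ℝ c

/-- The lattice generated by a family of vectors: all integer combinations. -/
noncomputable def latE {E : Type*} [NormedAddCommGroup E] [InnerProductSpace ℝ E] {r : ℕ}
    (c : Fin r → E) : AddSubgroup E :=
  AddSubgroup.closure (Set.range c)

/-- The length of a shortest nonzero vector of the lattice generated by `c`. -/
noncomputable def lambda1 {E : Type*} [NormedAddCommGroup E] [InnerProductSpace ℝ E] {r : ℕ}
    (c : Fin r → E) : ℝ :=
  sInf { t | ∃ v ∈ latE c, v ≠ 0 ∧ ‖v‖ = t }

/-- The determinant of the lattice with basis `c` : the square root of the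
Gram determinant of `c`. -/
noncomputable def latDet {E : Type*} [NormedAddCommGroup E] [InnerProductSpace ℝ E] {r : ℕ}
    (c : Fin r → E) : ℝ :=
  Real.sqrt (Matrix.det (Matrix.of fun i j : Fin r => (inner ℝ (c i) (c j) : ℝ)))

/-- Hermite's constant of rank `j`. -/
noncomputable def hermiteC (j : ℕ) : ℝ :=
  sSup { t | ∃ c : Fin j → EuclideanSpace ℝ (Fin j), LinearIndependent ℝ c ∧
    t = lambda1 c ^ 2 / latDet c ^ ((2 : ℝ) / j) }

/-- `γ_j = max {C_1, ..., C_j}`. -/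
noncomputable def gammaH (j : ℕ) : ℝ := sSup (hermiteC '' Set.Icc 1 j)

/-- Projection onto the orthogonal complement of the span of a set. -/
noncomputable def projPerp {E : Type*} [NormedAddCommGroup E] [InnerProductSpace ℝ E]
    [FiniteDimensional ℝ E] (S : Set E) (v : E) : E :=
  (Submodule.orthogonalProjectionOnto (Submodule.span ℝ S)ᗮ v : E)

/-- A family `c_0, ..., c_{r-1}` is Korkhine-Zolotarev reduced if for each `i`, the projection
`c_i(i)` of `c_i` onto the orthogonal complement of `span(c_0, ..., c_{i-1})` is a shortest
nonzero vector of the lattice generated by the projections of the `c_j` onto that complement. -/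
def KZReduced {E : Type*} [NormedAddCommGroup E] [InnerProductSpace ℝ E]
    [FiniteDimensional ℝ E] {r : ℕ} (c : Fin r → E) : Prop :=
  ∀ i : Fin r,
    ∀ v ∈ latE (fun j => projPerp (c '' { j : Fin r | j < i }) (c j)),
      v ≠ 0 → ‖projPerp (c '' { j : Fin r | j < i }) (c i)‖ ≤ ‖v‖

/-- A basis `b_0, ..., b_{r-1}` of a lattice is RKZ reduced if its reciprocal basis
(the unique family `b'` in the span with `⟨b_i, b'_j⟩ = 1` if `i + j = r + 1` (1-indexed)
and `0` otherwise) is Korkhine-Zolotarev reduced. -/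
def RKZReduced {E : Type*} [NormedAddCommGroup E] [InnerProductSpace ℝ E]
    [FiniteDimensional ℝ E] {r : ℕ} (b : Fin r → E) : Prop :=
  ∃ b' : Fin r → E,
    (∀ j, b' j ∈ Submodule.span ℝ (Set.range b)) ∧
    (∀ i j : Fin r, (inner ℝ (b i) (b' j) : ℝ) =
      if (i : ℕ) + (j : ℕ) + 1 = r then 1 else 0) ∧
    KZReduced b'

/-!
Write `b'` for the reciprocal basis and `D = ‖b₁*‖ ⋯ ‖bᵢ*‖`. Since `b'` pairs with `b` in
reversed order, its Gram-Schmidt vectors are `b'ₖ* = b*ᵣ₊₁₋ₖ / ‖b*ᵣ₊₁₋ₖ‖²`. Hence the last `i`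
vectors of `b'`, projected orthogonally to the others, span a lattice of rank `i` and determinant
`1 / D`, and by KZ reduction its first minimum is `‖b'ᵣ₊₁₋ᵢ*‖ = 1 / ‖bᵢ*‖`. Hermite's inequality for
this lattice and for the sublattice spanned by `b₁, …, bᵢ` give
`‖bᵢ*‖⁻² ≤ Cᵢ D^(-2/i)` and `λ₁(L)² ≤ Cᵢ D^(2/i)`, whose product is `λ₁(L)² ≤ Cᵢ² ‖bᵢ*‖²`.
-/

open Submodule Set InnerProductSpace
open scoped RealInnerProductSpace

section GramSchmidt

variable {E : Type*} [NormedAddCommGroup E] [InnerProductSpace ℝ E] {n : ℕ}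

theorem mem_orthogonal_span_iff {s : Set E} {v : E} :
    v ∈ (span ℝ s)ᗮ ↔ ∀ u ∈ s, ⟪u, v⟫ = 0 := by
  rw [← span_singleton_le_iff_mem, ← isOrtho_iff_le, isOrtho_comm, isOrtho_span]
  simp

variable (c : Fin n → E) (k : Fin n)

theorem gramSchmidt_mem_orthogonal_span_Iio :
    gramSchmidt ℝ c k ∈ (span ℝ (c '' Iio k))ᗮ := by
  rw [← span_gramSchmidt_Iio, mem_orthogonal_span_iff]
  rintro _ ⟨j, hj, rfl⟩
  exact gramSchmidt_orthogonal ℝ c (ne_of_lt hj)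

theorem sub_gramSchmidt_mem_span_Iio : c k - gramSchmidt ℝ c k ∈ span ℝ (c '' Iio k) := by
  rw [← span_gramSchmidt_Iio, gramSchmidt_def, sub_sub_cancel]
  refine sum_mem fun j hj => ?_
  rw [starProjection_singleton]
  exact smul_mem _ _ (subset_span ⟨j, Finset.mem_Iio.1 hj, rfl⟩)

theorem gramSchmidt_eq_of_mem_orthogonal {v : E} (hv : v ∈ (span ℝ (c '' Iio k))ᗮ)
    (hsub : c k - v ∈ span ℝ (c '' Iio k)) : gramSchmidt ℝ c k = v := by
  have hmem : gramSchmidt ℝ c k - v ∈ span ℝ (c '' Iio k) ⊓ (span ℝ (c '' Iio k))ᗮ :=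
    ⟨by simpa using sub_mem hsub (sub_gramSchmidt_mem_span_Iio c k),
      sub_mem (gramSchmidt_mem_orthogonal_span_Iio c k) hv⟩
  rwa [inf_orthogonal_eq_bot, mem_bot, sub_eq_zero] at hmem

theorem inner_gramSchmidt_self : ⟪c k, gramSchmidt ℝ c k⟫ = ‖gramSchmidt ℝ c k‖ ^ 2 := by
  rw [← sub_add_cancel (c k) (gramSchmidt ℝ c k), inner_add_left,
    inner_right_of_mem_orthogonal (sub_gramSchmidt_mem_span_Iio c k)
      (gramSchmidt_mem_orthogonal_span_Iio c k), zero_add, real_inner_self_eq_norm_sq]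

theorem projPerp_eq_gramSchmidt [FiniteDimensional ℝ E] :
    projPerp (c '' Iio k) (c k) = gramSchmidt ℝ c k :=
  eq_starProjection_of_mem_orthogonal (gramSchmidt_mem_orthogonal_span_Iio c k)
    (le_orthogonal_orthogonal _ (sub_gramSchmidt_mem_span_Iio c k))

theorem linearIndependent_of_gramSchmidt_ne_zero (h : ∀ k, gramSchmidt ℝ c k ≠ 0) :
    LinearIndependent ℝ c := by
  have hgs : LinearIndependent ℝ (gramSchmidt ℝ c) :=
    linearIndependent_of_ne_zero_of_inner_eq_zero h fun _ _ => gramSchmidt_orthogonal ℝ c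
  rw [linearIndependent_iff_card_eq_finrank_span] at hgs ⊢
  rwa [Set.finrank, ← span_gramSchmidt ℝ c]

theorem gramSchmidt_comp_castLE {m : ℕ} (h : m ≤ n) (l : Fin m) :
    gramSchmidt ℝ (c ∘ Fin.castLE h) l = gramSchmidt ℝ c (Fin.castLE h l) := by
  have himage : (c ∘ Fin.castLE h) '' Iio l = c '' Iio (Fin.castLE h l) := by
    rw [image_comp]
    congr 1
    ext j
    simp only [mem_image, mem_Iio]
    constructor
    · rintro ⟨j, hj, rfl⟩; exact hj
    · intro hj; exact ⟨⟨j, by simp only [Fin.lt_def, Fin.val_castLE] at hj; omega⟩, hj, rfl⟩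
  apply gramSchmidt_eq_of_mem_orthogonal <;> rw [himage]
  · exact gramSchmidt_mem_orthogonal_span_Iio c _
  · exact sub_gramSchmidt_mem_span_Iio c _

theorem latDet_eq_prod_norm_gramSchmidt (hc : LinearIndependent ℝ c) :
    latDet c = ∏ k, ‖gramSchmidt ℝ c k‖ := by
  set u := gramSchmidtNormed ℝ c
  have hu : Orthonormal ℝ u := gramSchmidtNormed_orthonormal hc
  set A : Matrix (Fin n) (Fin n) ℝ := Matrix.of fun a m => ⟪u m, c a⟫
  have hgram : Matrix.of (fun a b => ⟪c a, c b⟫) = A * A.transpose := by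
    ext a b
    have hb : c b ∈ span ℝ (range u) := by
      rw [span_gramSchmidtNormed_range, span_gramSchmidt]
      exact subset_span (mem_range_self b)
    obtain ⟨w, hw⟩ := (mem_span_range_iff_exists_fun ℝ).1 hb
    have hwm : ∀ m, ⟪u m, c b⟫ = w m := fun m => by rw [← hw, hu.inner_right_fintype]
    simp only [A, Matrix.of_apply, Matrix.mul_apply, Matrix.transpose_apply, hwm]
    conv_lhs => rw [← hw]
    rw [inner_sum]
    exact Finset.sum_congr rfl fun m _ => by rw [real_inner_smul_right, real_inner_comm, mul_comm]
  have hdet : A.det = ∏ k, ‖gramSchmidt ℝ c k‖ := by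
    rw [Matrix.det_of_isLowerTriangular A fun a m (h : a < m) => by
      simp [A, u, gramSchmidtNormed, real_inner_smul_left, gramSchmidt_inv_triangular ℝ c h]]
    refine Finset.prod_congr rfl fun k _ => ?_
    have hk : ‖gramSchmidt ℝ c k‖ ≠ 0 := norm_ne_zero_iff.2 (gramSchmidt_ne_zero k hc)
    show ⟪gramSchmidtNormed ℝ c k, c k⟫ = _
    rw [gramSchmidtNormed, real_inner_smul_left, real_inner_comm, inner_gramSchmidt_self]
    simp only [Real.ringHom_apply]
    field_simp
  rw [latDet, hgram, Matrix.det_mul, Matrix.det_transpose, hdet, ← sq,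
    Real.sqrt_sq (Finset.prod_nonneg fun k _ => norm_nonneg _)]

end GramSchmidt

section Lattice

variable {E F : Type*} [NormedAddCommGroup E] [InnerProductSpace ℝ E]
  [NormedAddCommGroup F] [InnerProductSpace ℝ F] {n : ℕ}

theorem lambda1_nonneg (c : Fin n → E) : 0 ≤ lambda1 c :=
  Real.sInf_nonneg (by rintro t ⟨v, _, _, rfl⟩; exact norm_nonneg v)

theorem lambda1_le_norm {c : Fin n → E} {v : E} (hv : v ∈ latE c) (h0 : v ≠ 0) :
    lambda1 c ≤ ‖v‖ :=
  csInf_le ⟨0, by rintro t ⟨w, _, _, rfl⟩; exact norm_nonneg w⟩ ⟨v, hv, h0, rfl⟩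

theorem le_lambda1 {c : Fin n → E} {x : ℝ} (hne : ∃ v ∈ latE c, v ≠ 0)
    (h : ∀ v ∈ latE c, v ≠ 0 → x ≤ ‖v‖) : x ≤ lambda1 c := by
  obtain ⟨w, hw, hw0⟩ := hne
  refine le_csInf ⟨‖w‖, w, hw, hw0, rfl⟩ ?_
  rintro t ⟨v, hv, h0, rfl⟩
  exact h v hv h0

theorem lambda1_le_of_latE_le {m : ℕ} {c : Fin m → E} {d : Fin n → E} (h : latE c ≤ latE d)
    (hne : ∃ v ∈ latE c, v ≠ 0) : lambda1 d ≤ lambda1 c :=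
  le_lambda1 hne fun _ hv h0 => lambda1_le_norm (h hv) h0

theorem latE_comp_linearIsometry (f : E →ₗᵢ[ℝ] F) (c : Fin n → E) :
    latE (f ∘ c) = (latE c).map f.toLinearMap.toAddMonoidHom := by
  rw [latE, latE, AddMonoidHom.map_closure, range_comp]
  rfl

theorem lambda1_comp_linearIsometry (f : E →ₗᵢ[ℝ] F) (c : Fin n → E) :
    lambda1 (f ∘ c) = lambda1 c := by
  unfold lambda1
  congr 1
  ext t
  simp only [latE_comp_linearIsometry, AddSubgroup.mem_map, mem_ofPred_eq]
  constructor
  · rintro ⟨_, ⟨v, hv, rfl⟩, h0, rfl⟩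
    exact ⟨v, hv, fun h => h0 (by simp [h]), (f.norm_map v).symm⟩
  · rintro ⟨v, hv, h0, rfl⟩
    exact ⟨f v, ⟨v, hv, rfl⟩, (map_ne_zero_iff f f.injective).2 h0, f.norm_map v⟩

theorem latDet_comp_linearIsometry (f : E →ₗᵢ[ℝ] F) (c : Fin n → E) :
    latDet (f ∘ c) = latDet c := by
  unfold latDet
  congr 2 with i j
  exact f.inner_map_map (c i) (c j)

theorem sq_lambda1_le_hermiteC_mul {c : Fin n → E} (hc : LinearIndependent ℝ c)
    (hC : 0 < hermiteC n) : lambda1 c ^ 2 ≤ hermiteC n * latDet c ^ ((2 : ℝ) / n) := by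
  set U := span ℝ (range c)
  have : FiniteDimensional ℝ U := FiniteDimensional.span_of_finite ℝ (finite_range c)
  have hU : Module.finrank ℝ U = n := by rw [finrank_span_eq_card hc, Fintype.card_fin]
  let e : U ≃ₗᵢ[ℝ] EuclideanSpace ℝ (Fin n) :=
    ((stdOrthonormalBasis ℝ U).reindex (finCongr hU)).repr
  let c' : Fin n → EuclideanSpace ℝ (Fin n) := fun m => e ⟨c m, subset_span (mem_range_self m)⟩
  have hcc' : c = (U.subtypeₗᵢ.comp e.symm.toLinearIsometry) ∘ c' := by
    funext m; simp [c']
  have hc' : LinearIndependent ℝ c' := by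
    rw [hcc'] at hc
    exact hc.of_comp _
  have hbdd : BddAbove {t | ∃ d : Fin n → EuclideanSpace ℝ (Fin n), LinearIndependent ℝ d ∧
      t = lambda1 d ^ 2 / latDet d ^ ((2 : ℝ) / n)} := by
    by_contra h
    rw [hermiteC, Real.sSup_of_not_bddAbove h] at hC
    exact lt_irrefl 0 hC
  have hle : lambda1 c ^ 2 / latDet c ^ ((2 : ℝ) / n) ≤ hermiteC n := by
    rw [hcc', lambda1_comp_linearIsometry, latDet_comp_linearIsometry]
    exact le_csSup hbdd ⟨c', hc', rfl⟩
  have hdet : 0 < latDet c := by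
    rw [latDet_eq_prod_norm_gramSchmidt c hc]
    exact Finset.prod_pos fun m _ => norm_pos_iff.2 (gramSchmidt_ne_zero m hc)
  rwa [div_le_iff₀ (Real.rpow_pos_of_pos hdet _)] at hle

theorem sq_lambda1_le_hermiteC_mul_prod {c : Fin n → E} (hc : LinearIndependent ℝ c) {m : ℕ}
    (hm : 0 < m) (hmn : m ≤ n) (hC : 0 < hermiteC m) :
    lambda1 c ^ 2 ≤
      hermiteC m * (∏ l : Fin m, ‖gramSchmidt ℝ c (Fin.castLE hmn l)‖) ^ ((2 : ℝ) / m) := by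
  have hd : LinearIndependent ℝ (c ∘ Fin.castLE hmn) := hc.comp _ (Fin.castLE_injective hmn)
  have hsub : latE (c ∘ Fin.castLE hmn) ≤ latE c :=
    AddSubgroup.closure_mono (range_comp_subset_range _ _)
  have hle : lambda1 c ≤ lambda1 (c ∘ Fin.castLE hmn) :=
    lambda1_le_of_latE_le hsub
      ⟨_, AddSubgroup.subset_closure (mem_range_self ⟨0, hm⟩), hd.ne_zero _⟩
  calc lambda1 c ^ 2 ≤ lambda1 (c ∘ Fin.castLE hmn) ^ 2 :=
        pow_le_pow_left₀ (lambda1_nonneg c) hle 2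
    _ ≤ hermiteC m * latDet (c ∘ Fin.castLE hmn) ^ ((2 : ℝ) / m) :=
        sq_lambda1_le_hermiteC_mul hd hC
    _ = _ := by simp only [latDet_eq_prod_norm_gramSchmidt _ hd, gramSchmidt_comp_castLE]

end Lattice

section Reciprocal

theorem Fin.val_add_val_add_one_eq_iff_eq_rev {n : ℕ} {i j : Fin n} :
    (i : ℕ) + j + 1 = n ↔ j = i.rev := by
  rw [Fin.ext_iff, Fin.val_rev]
  omega

variable {E : Type*} [NormedAddCommGroup E] [InnerProductSpace ℝ E] {n : ℕ} {b b' : Fin n → E}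

theorem sum_inner_rev_smul_eq (hspan : ∀ j, b' j ∈ span ℝ (range b))
    (hpair : ∀ i j, ⟪b i, b' j⟫ = if j = i.rev then 1 else 0) {x : E}
    (hx : x ∈ span ℝ (range b)) : ∑ t, ⟪b t.rev, x⟫ • b' t = x := by
  set y := x - ∑ t, ⟪b t.rev, x⟫ • b' t
  have hy : y ∈ span ℝ (range b) :=
    sub_mem hx (sum_mem fun t _ => smul_mem _ _ (hspan t))
  have hy' : y ∈ (span ℝ (range b))ᗮ := by
    rw [mem_orthogonal_span_iff]
    rintro _ ⟨s, rfl⟩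
    simp [y, inner_sub_right, inner_sum, real_inner_smul_right, hpair]
  have : y ∈ span ℝ (range b) ⊓ (span ℝ (range b))ᗮ := ⟨hy, hy'⟩
  rw [inf_orthogonal_eq_bot, mem_bot, sub_eq_zero] at this
  exact this.symm

theorem mem_span_image_Iio_of_inner_eq_zero (hspan : ∀ j, b' j ∈ span ℝ (range b))
    (hpair : ∀ i j, ⟪b i, b' j⟫ = if j = i.rev then 1 else 0) {k : Fin n} {x : E}
    (hx : x ∈ span ℝ (range b)) (horth : ∀ s ≤ k.rev, ⟪b s, x⟫ = 0) :
    x ∈ span ℝ (b' '' Iio k) := by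
  rw [← sum_inner_rev_smul_eq hspan hpair hx]
  refine sum_mem fun t _ => ?_
  rcases lt_or_ge t k with ht | ht
  · exact smul_mem _ _ (subset_span ⟨t, ht, rfl⟩)
  · rw [horth _ (Fin.rev_le_rev.2 ht), zero_smul]
    exact zero_mem _

theorem gramSchmidt_eq_smul_gramSchmidt_rev (hb : LinearIndependent ℝ b)
    (hspan : ∀ j, b' j ∈ span ℝ (range b))
    (hpair : ∀ i j, ⟪b i, b' j⟫ = if j = i.rev then 1 else 0) (k : Fin n) :
    gramSchmidt ℝ b' k = (‖gramSchmidt ℝ b k.rev‖ ^ 2)⁻¹ • gramSchmidt ℝ b k.rev := by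
  have hg : ‖gramSchmidt ℝ b k.rev‖ ≠ 0 := norm_ne_zero_iff.2 (gramSchmidt_ne_zero _ hb)
  apply gramSchmidt_eq_of_mem_orthogonal
  · have hperp : ∀ t < k, b' t ∈ (span ℝ (b '' Iic k.rev))ᗮ := by
      intro t ht
      rw [mem_orthogonal_span_iff]
      rintro _ ⟨s, hs, rfl⟩
      rw [hpair, if_neg]
      rintro rfl
      exact absurd (Fin.rev_le_rev.1 (by simpa using hs)) (not_le.2 ht)
    rw [mem_orthogonal_span_iff]
    rintro _ ⟨t, ht, rfl⟩
    rw [real_inner_smul_right, inner_left_of_mem_orthogonal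
      (gramSchmidt_mem_span ℝ b le_rfl) (hperp t ht), mul_zero]
  · refine mem_span_image_Iio_of_inner_eq_zero hspan hpair
      (sub_mem (hspan k) (smul_mem _ _ ?_)) fun s hs => ?_
    · exact span_mono (image_subset_range _ _) (gramSchmidt_mem_span ℝ b le_rfl)
    rw [inner_sub_right, real_inner_smul_right, hpair]
    rcases hs.lt_or_eq with hs | rfl
    · rw [if_neg (fun h => hs.ne (by rw [h, Fin.rev_rev])),
        inner_right_of_mem_orthogonal (subset_span (mem_image_of_mem b hs))
          (gramSchmidt_mem_orthogonal_span_Iio b k.rev)]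
      ring
    · rw [if_pos (Fin.rev_rev k).symm, inner_gramSchmidt_self]
      field_simp
      ring

theorem norm_gramSchmidt_eq_inv_norm_gramSchmidt_rev (hb : LinearIndependent ℝ b)
    (hspan : ∀ j, b' j ∈ span ℝ (range b))
    (hpair : ∀ i j, ⟪b i, b' j⟫ = if j = i.rev then 1 else 0) (k : Fin n) :
    ‖gramSchmidt ℝ b' k‖ = ‖gramSchmidt ℝ b k.rev‖⁻¹ := by
  rw [gramSchmidt_eq_smul_gramSchmidt_rev hb hspan hpair, norm_smul, norm_inv, norm_pow,
    norm_norm]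
  have hg : ‖gramSchmidt ℝ b k.rev‖ ≠ 0 := norm_ne_zero_iff.2 (gramSchmidt_ne_zero _ hb)
  field_simp

theorem linearIndependent_of_inner_eq_ite_rev (hb : LinearIndependent ℝ b)
    (hspan : ∀ j, b' j ∈ span ℝ (range b))
    (hpair : ∀ i j, ⟪b i, b' j⟫ = if j = i.rev then 1 else 0) : LinearIndependent ℝ b' :=
  linearIndependent_of_gramSchmidt_ne_zero b' fun k => by
    rw [← norm_ne_zero_iff, norm_gramSchmidt_eq_inv_norm_gramSchmidt_rev hb hspan hpair]
    exact inv_ne_zero (norm_ne_zero_iff.2 (gramSchmidt_ne_zero _ hb))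

theorem prod_norm_gramSchmidt_tail_eq_inv (hb : LinearIndependent ℝ b)
    (hspan : ∀ j, b' j ∈ span ℝ (range b))
    (hpair : ∀ i j, ⟪b i, b' j⟫ = if j = i.rev then 1 else 0) (i : Fin n) :
    ∏ l : Fin ((i : ℕ) + 1), ‖gramSchmidt ℝ b' ⟨i.rev + l, by have := Fin.val_rev i; omega⟩‖ =
      (∏ l : Fin ((i : ℕ) + 1), ‖gramSchmidt ℝ b (Fin.castLE i.isLt l)‖)⁻¹ := by
  rw [← Equiv.prod_comp Fin.revPerm, ← Finset.prod_inv_distrib]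
  refine Finset.prod_congr rfl fun l _ => ?_
  rw [norm_gramSchmidt_eq_inv_norm_gramSchmidt_rev hb hspan hpair]
  congr 3
  simp only [Fin.ext_iff, Fin.val_rev, Fin.revPerm_apply, Fin.val_castLE]
  omega

end Reciprocal

section ProjectedTail

variable {E : Type*} [NormedAddCommGroup E] [InnerProductSpace ℝ E] [FiniteDimensional ℝ E]
  {n : ℕ} (c : Fin n → E) (k : Fin n) {m : ℕ} (hkm : (k : ℕ) + m = n)

noncomputable def projTail : Fin m → E :=
  fun l => projPerp (c '' Iio k) (c ⟨k + l, by omega⟩)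

theorem projPerp_apply (S : Set E) (v : E) : projPerp S v = (span ℝ S)ᗮ.starProjection v := rfl

theorem projPerp_apply_of_lt {j : Fin n} (hj : j < k) : projPerp (c '' Iio k) (c j) = 0 :=
  (starProjection_apply_eq_zero_iff _).2 (le_orthogonal_orthogonal _ (subset_span ⟨j, hj, rfl⟩))

theorem projPerp_apply_of_le {j : Fin n} (hj : k ≤ j) :
    projPerp (c '' Iio k) (c j) = projTail c k hkm ⟨j - k, by omega⟩ := by
  simp only [projTail, Nat.add_sub_of_le (Fin.le_def.1 hj)]

theorem latE_projPerp_eq_latE_projTail :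
    latE (fun j => projPerp (c '' Iio k) (c j)) = latE (projTail c k hkm) := by
  apply le_antisymm <;> rw [latE, AddSubgroup.closure_le]
  · rintro _ ⟨j, rfl⟩
    change projPerp (c '' Iio k) (c j) ∈ latE (projTail c k hkm)
    rcases lt_or_ge j k with hj | hj
    · rw [projPerp_apply_of_lt c k hj]
      exact zero_mem _
    · rw [projPerp_apply_of_le c k hkm hj]
      exact AddSubgroup.subset_closure (mem_range_self _)
  · rintro _ ⟨l, rfl⟩
    exact AddSubgroup.subset_closure (mem_range_self _)

theorem gramSchmidt_projTail (l : Fin m) :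
    gramSchmidt ℝ (projTail c k hkm) l = gramSchmidt ℝ c ⟨k + l, by omega⟩ := by
  set a : Fin n := ⟨k + l, by omega⟩
  set K := span ℝ (c '' Iio k)
  set W := span ℝ (c '' Iio a)
  have hKW : K ≤ W := span_mono (image_mono (Iio_subset_Iio (Fin.le_def.2 (by simp [a]))))
  have hperp : gramSchmidt ℝ c a ∈ Wᗮ := gramSchmidt_mem_orthogonal_span_Iio c a
  have hmapsto : ∀ x ∈ W, projPerp (c '' Iio k) x ∈ span ℝ (projTail c k hkm '' Iio l) := by
    intro x hx
    refine (span_le (p := (span ℝ (projTail c k hkm '' Iio l)).comap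
      (Kᗮ.starProjection : E →ₗ[ℝ] E)).2 ?_ hx)
    rintro _ ⟨j, hj, rfl⟩
    change projPerp (c '' Iio k) (c j) ∈ span ℝ (projTail c k hkm '' Iio l)
    rcases lt_or_ge j k with hjk | hjk
    · rw [projPerp_apply_of_lt c k hjk]
      exact zero_mem _
    · rw [projPerp_apply_of_le c k hkm hjk]
      refine subset_span ⟨_, ?_, rfl⟩
      simp only [a, mem_Iio, Fin.lt_def] at hj ⊢
      omega
  apply gramSchmidt_eq_of_mem_orthogonal
  · rw [mem_orthogonal_span_iff]
    rintro _ ⟨t, ht, rfl⟩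
    refine inner_right_of_mem_orthogonal ?_ hperp
    rw [projTail, projPerp_apply, starProjection_orthogonal_val]
    refine sub_mem (subset_span ⟨_, ?_, rfl⟩) (hKW (coe_mem _))
    simp only [a, mem_Iio, Fin.lt_def] at ht ⊢
    omega
  · have hfix : projPerp (c '' Iio k) (gramSchmidt ℝ c a) = gramSchmidt ℝ c a :=
      starProjection_eq_self_iff.2 (orthogonal_le hKW hperp)
    have := hmapsto _ (sub_gramSchmidt_mem_span_Iio c a)
    rwa [projPerp_apply, map_sub, ← projPerp_apply, ← projPerp_apply, hfix] at this

theorem linearIndependent_projTail {c : Fin n → E} (hc : LinearIndependent ℝ c) :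
    LinearIndependent ℝ (projTail c k hkm) :=
  linearIndependent_of_gramSchmidt_ne_zero _ fun l => by
    rw [gramSchmidt_projTail]
    exact gramSchmidt_ne_zero _ hc

theorem KZReduced.sq_norm_gramSchmidt_le {c : Fin n → E} (hKZ : KZReduced c)
    (hc : LinearIndependent ℝ c) (hC : 0 < hermiteC m) :
    ‖gramSchmidt ℝ c k‖ ^ 2 ≤
      hermiteC m * (∏ l : Fin m, ‖gramSchmidt ℝ c ⟨k + l, by omega⟩‖) ^ ((2 : ℝ) / m) := by
  have hq := linearIndependent_projTail k hkm hc
  have hmin : ‖gramSchmidt ℝ c k‖ ≤ lambda1 (projTail c k hkm) := by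
    refine le_lambda1 ⟨_, AddSubgroup.subset_closure (mem_range_self ⟨0, by omega⟩),
      hq.ne_zero _⟩ fun v hv h0 => ?_
    have hv' : v ∈ latE (fun j => projPerp (c '' Iio k) (c j)) := by
      rwa [latE_projPerp_eq_latE_projTail c k hkm]
    rw [← projPerp_eq_gramSchmidt]
    exact hKZ k v hv' h0
  calc ‖gramSchmidt ℝ c k‖ ^ 2 ≤ lambda1 (projTail c k hkm) ^ 2 :=
        pow_le_pow_left₀ (norm_nonneg _) hmin 2
    _ ≤ hermiteC m * latDet (projTail c k hkm) ^ ((2 : ℝ) / m) :=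
        sq_lambda1_le_hermiteC_mul hq hC
    _ = _ := by simp only [latDet_eq_prod_norm_gramSchmidt _ hq, gramSchmidt_projTail]

end ProjectedTail

theorem div_le_of_sq_le_mul_of_inv_sq_le_mul_inv {a g C X : ℝ} (ha : 0 ≤ a) (hg : 0 < g)
    (hC : 0 < C) (hX : 0 < X) (h₁ : a ^ 2 ≤ C * X) (h₂ : g⁻¹ ^ 2 ≤ C * X⁻¹) : a / C ≤ g := by
  rw [inv_pow, ← div_eq_mul_inv, inv_le_comm₀ (by positivity) (by positivity), inv_div,
    div_le_iff₀ hC] at h₂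
  have hsq : a ^ 2 ≤ (C * g) ^ 2 :=
    calc a ^ 2 ≤ C * X := h₁
      _ ≤ C * (g ^ 2 * C) := mul_le_mul_of_nonneg_left h₂ hC.le
      _ = (C * g) ^ 2 := by ring
  rw [div_le_iff₀ hC, mul_comm]
  exact (pow_le_pow_iff_left₀ ha (by positivity) two_ne_zero).1 hsq

/-- for an RKZ-reduced basis `b_1, ..., b_r` of a lattice `L`, the Gram-Schmidt
vectors satisfy `‖b_i^*‖ ≥ λ₁(L) / C_i`, where `C_i` is Hermite's constant of rank `i`.
Here the rank is `r + 1`, and index `i : Fin (r+1)` corresponds to the 1-indexed `i + 1`. -/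
theorem gs_ge_of_RKZ {E : Type*} [NormedAddCommGroup E]
    [InnerProductSpace ℝ E] [FiniteDimensional ℝ E] {r : ℕ}
    (b : Fin (r + 1) → E) (hb : LinearIndependent ℝ b) (hrkz : RKZReduced b) :
    ∀ i : Fin (r + 1), lambda1 b / hermiteC ((i : ℕ) + 1) ≤ ‖gsE b i‖ := by
  obtain ⟨b', hspan, hpair, hKZ⟩ := hrkz
  simp only [Fin.val_add_val_add_one_eq_iff_eq_rev] at hpair
  intro i
  -- `hermiteC` is `0` when its defining set is unbounded
  rcases le_or_gt (hermiteC ((i : ℕ) + 1)) 0 with hC | hC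
  · exact (div_nonpos_of_nonneg_of_nonpos (lambda1_nonneg b) hC).trans (norm_nonneg _)
  set D := ∏ l : Fin ((i : ℕ) + 1), ‖gramSchmidt ℝ b (Fin.castLE i.isLt l)‖
  have hD : 0 < D := Finset.prod_pos fun l _ => norm_pos_iff.2 (gramSchmidt_ne_zero _ hb)
  have hupper := hKZ.sq_norm_gramSchmidt_le i.rev (m := (i : ℕ) + 1)
    (by rw [Fin.val_rev]; omega) (linearIndependent_of_inner_eq_ite_rev hb hspan hpair) hC
  rw [prod_norm_gramSchmidt_tail_eq_inv hb hspan hpair, Real.inv_rpow hD.le,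
    norm_gramSchmidt_eq_inv_norm_gramSchmidt_rev hb hspan hpair, Fin.rev_rev] at hupper
  exact div_le_of_sq_le_mul_of_inv_sq_le_mul_inv (lambda1_nonneg b)
    (norm_pos_iff.2 (gramSchmidt_ne_zero i hb)) hC (Real.rpow_pos_of_pos hD _)
    (sq_lambda1_le_hermiteC_mul_prod hb (Nat.succ_pos _) i.isLt hC) hupper
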